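/- The generating function of plane partitions π with at most n rows and entries at most m, weighted by t^{des(π)} q^{|π|_{uh}} where des(π) = |Des(π)| and |π|_{uh} = Σ_{(i,j)∈Des(π)} (π_{ij} + i − 1), equals ∏_{i=1}^{m} ∏_{j=1}^{n} 1/(1 − t q^{i+j−1}). -/

import Mathlib

open scoped BigOperators

/-- A plane partition: a finitely supported `ℕ`-array (0-indexed) weakly
decreasing along rows and columns. -/
structure PlanePartition where
  entry : ℕ → ℕ → ℕ
  row_decr : ∀ i j, entry i (j + 1) ≤ entry i j
  col_decr : ∀ i j, entry (i + 1) j ≤ entry i j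
  finite_support : {p : ℕ × ℕ | entry p.1 p.2 ≠ 0}.Finite

namespace PlanePartition

/-- `π` has at most `n` (nonzero) rows. -/
def RowsLE (π : PlanePartition) (n : ℕ) : Prop := ∀ i j, n ≤ i → π.entry i j = 0

/-- `π` has at most `k` (nonzero) columns. -/
def ColsLE (π : PlanePartition) (k : ℕ) : Prop := ∀ i j, k ≤ j → π.entry i j = 0

/-- all entries of `π` are at most `m`. -/
def EntriesLE (π : PlanePartition) (m : ℕ) : Prop := ∀ i j, π.entry i j ≤ m

/-- The descent set of `π` (0-indexed cells). -/
def Des (π : PlanePartition) : Set (ℕ × ℕ) :=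
  {p | π.entry (p.1 + 1) p.2 < π.entry p.1 p.2}

/-- number of descents of `π`. -/
noncomputable def des (π : PlanePartition) : ℕ := π.Des.ncard

/-- `dmat π i ℓ` is the matrix entry `d_{i+1, ℓ+1}` of `Φ(π)`: the number of columns `j`
with `π_{ij} = ℓ+1 > π_{i+1,j}` (here `i`, `ℓ` are 0-indexed). -/
noncomputable def dmat (π : PlanePartition) (i ℓ : ℕ) : ℕ :=
  {j : ℕ | π.entry i j = ℓ + 1 ∧ π.entry (i + 1) j ≤ ℓ}.ncard

/-- the volume `|π|`. -/
noncomputable def vol (π : PlanePartition) : ℕ := ∑ᶠ p : ℕ × ℕ, π.entry p.1 p.2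

/-- the up-hook volume `|π|_{uh} = Σ_{(i,j) ∈ Des(π)} (π_{ij} + i - 1)` (1-indexed `i`;
in our 0-indexed convention the summand is `π.entry p.1 p.2 + p.1`). -/
noncomputable def uhvol (π : PlanePartition) : ℕ :=
  ∑ᶠ p ∈ π.Des, (π.entry p.1 p.2 + p.1)

/-- the corner volume `|π|_c = Σ_{(i,j) ∈ Des(π)} π_{ij}`. -/
noncomputable def cvol (π : PlanePartition) : ℕ :=
  ∑ᶠ p ∈ π.Des, π.entry p.1 p.2

/-- the trace `tr(π) = Σ_i π_{ii}`. -/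
noncomputable def trace (π : PlanePartition) : ℕ := ∑ᶠ i : ℕ, π.entry i i

/-- `colCount π v` is the number of columns of `π` containing the entry `v`. -/
noncomputable def colCount (π : PlanePartition) (v : ℕ) : ℕ :=
  {j : ℕ | ∃ i, π.entry i j = v}.ncard

/-- the length of row `i` (0-indexed) of `π`. -/
noncomputable def rowLen (π : PlanePartition) (i : ℕ) : ℕ :=
  {j : ℕ | π.entry i j ≠ 0}.ncard

/-- `π` is column-strict: entries strictly decrease down the columns (within the shape). -/
def ColStrict (π : PlanePartition) : Prop :=
  ∀ i j, π.entry i j ≠ 0 → π.entry (i + 1) j < π.entry i j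

/-- the shape of `π` is exactly the rectangle with `n` rows and `k` columns. -/
def ShapeRect (π : PlanePartition) (k n : ℕ) : Prop :=
  ∀ i j, π.entry i j ≠ 0 ↔ i < n ∧ j < k

end PlanePartition

/-- The Schur polynomial `s_{(k^n)}` of rectangular shape `(k^n)` in `N` variables
`x 0, …, x (N-1)`, defined via column-strict plane partitions of shape `(k^n)` with
entries at most `N`; the variable `x i` records entries equal to `i + 1`. -/
noncomputable def schurRect {R : Type*} [CommSemiring R] (k n N : ℕ) (x : ℕ → R) : R :=
  ∑ᶠ π ∈ {π : PlanePartition | π.ColStrict ∧ π.ShapeRect k n ∧ π.EntriesLE N},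
    ∏ i ∈ Finset.range N, x i ^ ({p : ℕ × ℕ | π.entry p.1 p.2 = i + 1}.ncard)

/-!
For a plane partition `π` with at most `n` rows and entries at most `m`, let `d i v` count the
descents in row `i` with entry `v + 1`. Each of them has up-hook `i + v + 1`, so
`t ^ des π * q ^ |π|_uh = ∏ (t q ^ (i + v + 1)) ^ d i v`, and the identity says that `π ↦ d` is a
bijection onto all `n × m` matrices over `ℕ`. Let `H i` be the conjugate of row `i`
(`H i v` = number of entries `> v` in row `i`). Then
`d i v = H i v - max (H (i + 1) v) (H i (v + 1))`: `H` is the last-passage time of the weights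
`d` on the box `[0, n) × [0, m)`, so `d` determines `H` by this recursion, any `d` arises from the
`H` it defines, and `π` is recovered from `H` by conjugating again.
-/

open Finset

lemma Set.Finite.eq_Iio_ncard_of_isLowerSet {s : Set ℕ} (hs : s.Finite) (h : IsLowerSet s) :
    s = Set.Iio s.ncard := by
  obtain h | ⟨a, rfl⟩ := h.eq_univ_or_Iio
  · exact absurd (h ▸ hs) Set.infinite_univ
  · rw [Set.ncard_Iio_nat]

noncomputable def conjugate (f : ℕ → ℕ) (v : ℕ) : ℕ := {j | v < f j}.ncard

section Conjugate

variable {f g : ℕ → ℕ} {N : ℕ}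

theorem lt_conjugate_iff (hf : Antitone f) (hN : f N = 0) {j v : ℕ} :
    j < conjugate f v ↔ v < f j := by
  have hfin : {j | v < f j}.Finite :=
    (Set.finite_Iio N).subset fun j (hj : v < f j) => not_le.1 fun hNj => by
      have : f j ≤ f N := hf hNj
      omega
  have hlow : IsLowerSet {j | v < f j} := fun _ _ hle hj => lt_of_lt_of_le hj (hf hle)
  rw [conjugate, ← Set.mem_Iio, ← hfin.eq_Iio_ncard_of_isLowerSet hlow]
  rfl

theorem conjugate_eq_zero (hf : Antitone f) (hN : f N = 0) : conjugate f (f 0) = 0 :=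
  Nat.eq_zero_of_not_pos fun h => (lt_conjugate_iff hf hN).1 h |>.not_ge (hf (Nat.zero_le 0))

theorem conjugate_antitone (hf : Antitone f) (hN : f N = 0) : Antitone (conjugate f) :=
  fun _ _ hvw => le_of_forall_lt fun _ hj =>
    (lt_conjugate_iff hf hN).2 (lt_of_le_of_lt hvw ((lt_conjugate_iff hf hN).1 hj))

theorem conjugate_mono (hf : Antitone f) (hg : Antitone g) (hN : g N = 0) (hfg : f ≤ g) :
    conjugate f ≤ conjugate g := fun v => le_of_forall_lt fun j hj => by
  have hfN : f N = 0 := Nat.eq_zero_of_le_zero (hN ▸ hfg N)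
  exact (lt_conjugate_iff hg hN).2 (lt_of_lt_of_le ((lt_conjugate_iff hf hfN).1 hj) (hfg j))

theorem conjugate_conjugate (hf : Antitone f) (hN : f N = 0) : conjugate (conjugate f) = f :=
  funext fun j => eq_of_forall_lt_iff fun v => by
    rw [lt_conjugate_iff (conjugate_antitone hf hN) (conjugate_eq_zero hf hN),
      lt_conjugate_iff hf hN]

end Conjugate

def lastPassage (n m : ℕ) (c : ℕ → ℕ → ℕ) (i v : ℕ) : ℕ :=
  if i < n ∧ v < m then c i v + max (lastPassage n m c (i + 1) v) (lastPassage n m c i (v + 1))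
  else 0
termination_by (n - i) + (m - v)

section LastPassage

variable {n m : ℕ} {c : ℕ → ℕ → ℕ} {i v : ℕ}

theorem lastPassage_of_lt (hi : i < n) (hv : v < m) :
    lastPassage n m c i v =
      c i v + max (lastPassage n m c (i + 1) v) (lastPassage n m c i (v + 1)) := by
  rw [lastPassage, if_pos ⟨hi, hv⟩]

theorem lastPassage_of_not_lt (h : ¬(i < n ∧ v < m)) : lastPassage n m c i v = 0 := by
  rw [lastPassage, if_neg h]

theorem lastPassage_succ_left_le : lastPassage n m c (i + 1) v ≤ lastPassage n m c i v := by
  by_cases h : i < n ∧ v < m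
  · rw [lastPassage_of_lt h.1 h.2 (c := c)]; omega
  · rw [lastPassage_of_not_lt (by omega)]; exact Nat.zero_le _

theorem lastPassage_antitone_right : Antitone (lastPassage n m c i) :=
  antitone_nat_of_succ_le fun v => by
    by_cases h : i < n ∧ v < m
    · rw [lastPassage_of_lt h.1 h.2 (c := c)]; omega
    · rw [lastPassage_of_not_lt (by omega)]; exact Nat.zero_le _

theorem eq_lastPassage (H : ℕ → ℕ → ℕ)
    (hrec : ∀ i < n, ∀ v < m, H i v = c i v + max (H (i + 1) v) (H i (v + 1)))
    (hout : ∀ i v, ¬(i < n ∧ v < m) → H i v = 0) (i v : ℕ) :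
    H i v = lastPassage n m c i v := by
  by_cases h : i < n ∧ v < m
  · rw [hrec i h.1 v h.2, lastPassage_of_lt h.1 h.2, eq_lastPassage H hrec hout (i + 1) v,
      eq_lastPassage H hrec hout i (v + 1)]
  · rw [hout i v h, lastPassage_of_not_lt h]
termination_by (n - i) + (m - v)

theorem lastPassage_antitone_left (v : ℕ) : Antitone (lastPassage n m c · v) :=
  antitone_nat_of_succ_le fun _ => lastPassage_succ_left_le

theorem lastPassage_right_eq_zero (i : ℕ) : lastPassage n m c i m = 0 :=
  lastPassage_of_not_lt (by omega)

theorem lt_conjugate_lastPassage_iff {j : ℕ} :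
    j < conjugate (lastPassage n m c i) v ↔ v < lastPassage n m c i j :=
  lt_conjugate_iff lastPassage_antitone_right (lastPassage_right_eq_zero i)

end LastPassage

theorem Finsupp.nsmul_left_injective {σ : Type*} {w : σ →₀ ℕ} (hw : w ≠ 0) :
    Function.Injective (· • w : ℕ → σ →₀ ℕ) := fun k k' h => by
  obtain ⟨x, hx⟩ := Finsupp.ne_iff.1 hw
  exact Nat.eq_of_mul_eq_mul_right (Nat.pos_of_ne_zero hx) (DFunLike.congr_fun h x)

namespace MvPowerSeries

variable {σ K : Type*} [Field K]

open Classical in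
theorem coeff_inv_one_sub_monomial {w : σ →₀ ℕ} (hw : w ≠ 0) (e : σ →₀ ℕ) :
    coeff e (1 - monomial w (1 : K))⁻¹ = if ∃ k : ℕ, k • w = e then 1 else 0 := by
  let g : MvPowerSeries σ K := fun e => if ∃ k : ℕ, k • w = e then 1 else 0
  suffices (1 - monomial w (1 : K))⁻¹ = g from this ▸ rfl
  rw [MvPowerSeries.inv_eq_iff_mul_eq_one (by
    rw [map_sub, map_one, ← coeff_zero_eq_constantCoeff_apply, coeff_monomial, if_neg hw.symm,
      sub_zero]
    exact one_ne_zero)]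
  ext e
  rw [mul_sub, mul_one, map_sub, coeff_mul_monomial, coeff_one, mul_one]
  change (if ∃ k : ℕ, k • w = e then (1 : K) else 0) -
    (if w ≤ e then if ∃ k : ℕ, k • w = e - w then 1 else 0 else 0) = if e = 0 then 1 else 0
  by_cases he : e = 0
  · simp [he, hw]
  by_cases hwe : w ≤ e
  · have : (∃ k : ℕ, k • w = e) ↔ ∃ k : ℕ, k • w = e - w := by
      constructor
      · rintro ⟨_ | k, hk⟩
        · exact absurd (by rw [← hk, zero_nsmul]) he
        · exact ⟨k, eq_tsub_of_add_eq (succ_nsmul w k ▸ hk)⟩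
      · rintro ⟨k, hk⟩
        exact ⟨k + 1, by rw [succ_nsmul, hk, tsub_add_cancel_of_le hwe]⟩
    simp [he, hwe, this]
  · have : ¬∃ k : ℕ, k • w = e := by
      rintro ⟨_ | k, hk⟩
      · exact he (by rw [← hk, zero_nsmul])
      · exact hwe (hk ▸ succ_nsmul w k ▸ le_add_self)
    simp [he, hwe, this]

theorem coeff_prod_inv_one_sub_monomial {ι : Type*} [Fintype ι] {w : ι → σ →₀ ℕ}
    (hw : ∀ i, w i ≠ 0) (d : σ →₀ ℕ) :
    coeff d (∏ i, (1 - monomial (w i) 1)⁻¹ : MvPowerSeries σ K) =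
      Nat.card {c : ι → ℕ // ∑ i, c i • w i = d} := by
  classical
  simp only [coeff_prod, coeff_inv_one_sub_monomial (hw _), Finset.prod_boole,
    Finset.mem_univ, forall_const, Finset.sum_boole]
  congr 1
  rw [← Nat.card_eq_finsetCard]
  symm
  refine Nat.card_congr (Equiv.ofBijective
    (fun c => ⟨Finsupp.equivFunOnFinite.symm fun i => c.1 i • w i, ?_⟩) ⟨?_, ?_⟩)
  · simp [Finset.mem_finsuppAntidiag, c.2]
  · intro c c' h
    exact Subtype.ext (funext fun i => Finsupp.nsmul_left_injective (hw i)
      (congrArg (fun l : ι →₀ σ →₀ ℕ => l i) (Subtype.ext_iff.1 h)))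
  · rintro ⟨l, hl⟩
    simp only [Finset.mem_filter, Finset.mem_finsuppAntidiag] at hl
    choose k hk using hl.2
    exact ⟨⟨k, by simp only [hk, ← hl.1.1]⟩, Subtype.ext (Finsupp.ext fun i => by simp [hk])⟩

end MvPowerSeries

namespace PlanePartition

theorem ext {π ρ : PlanePartition} (h : π.entry = ρ.entry) : π = ρ := by
  cases π; cases ρ; cases h; rfl

variable (π : PlanePartition) {n m : ℕ}

theorem antitone_entry (i : ℕ) : Antitone (π.entry i) := antitone_nat_of_succ_le (π.row_decr i)

theorem exists_entry_eq_zero (i : ℕ) : ∃ N, π.entry i N = 0 := by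
  obtain ⟨N, hN⟩ := (π.finite_support.preimage (Prod.mk_right_injective i).injOn).exists_notMem
  exact ⟨N, not_not.1 hN⟩

theorem lt_conjugate_entry_iff {i j v : ℕ} : j < conjugate (π.entry i) v ↔ v < π.entry i j :=
  let ⟨_, hN⟩ := π.exists_entry_eq_zero i
  lt_conjugate_iff (π.antitone_entry i) hN

theorem conjugate_entry_succ_left_le (i v : ℕ) :
    conjugate (π.entry (i + 1)) v ≤ conjugate (π.entry i) v :=
  let ⟨_, hN⟩ := π.exists_entry_eq_zero i
  conjugate_mono (π.antitone_entry (i + 1)) (π.antitone_entry i) hN (π.col_decr i) v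

theorem conjugate_entry_succ_right_le (i v : ℕ) :
    conjugate (π.entry i) (v + 1) ≤ conjugate (π.entry i) v :=
  let ⟨_, hN⟩ := π.exists_entry_eq_zero i
  conjugate_antitone (π.antitone_entry i) hN (Nat.le_succ v)

theorem dmat_eq_conjugate (i v : ℕ) :
    π.dmat i v = conjugate (π.entry i) v -
      max (conjugate (π.entry (i + 1)) v) (conjugate (π.entry i) (v + 1)) := by
  have : {j | π.entry i j = v + 1 ∧ π.entry (i + 1) j ≤ v} =
      Set.Ico (max (conjugate (π.entry (i + 1)) v) (conjugate (π.entry i) (v + 1)))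
        (conjugate (π.entry i) v) := by
    ext j
    simp only [Set.mem_Ico, ← not_lt, lt_max_iff, π.lt_conjugate_entry_iff, Set.mem_ofPred_eq]
    omega
  rw [dmat, this, Set.ncard_Ico_nat]

theorem conjugate_entry_eq_lastPassage {c : ℕ → ℕ → ℕ} (hR : π.RowsLE n) (hE : π.EntriesLE m)
    (hc : ∀ i < n, ∀ v < m, π.dmat i v = c i v) (i v : ℕ) :
    conjugate (π.entry i) v = lastPassage n m c i v := by
  refine eq_lastPassage (fun i v => conjugate (π.entry i) v) (fun i hi v hv => ?_)
    (fun i v hiv => ?_) i v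
  · have := π.conjugate_entry_succ_left_le i v
    have := π.conjugate_entry_succ_right_le i v
    rw [← hc i hi v hv, dmat_eq_conjugate]
    omega
  · refine Nat.eq_zero_of_not_pos fun h => ?_
    rw [lt_conjugate_entry_iff] at h
    have := hE i 0
    have : n ≤ i → π.entry i 0 = 0 := hR i 0
    omega

theorem finite_des : π.Des.Finite :=
  π.finite_support.subset fun _ (hp : _ < _) => Nat.ne_zero_of_lt hp

theorem card_filter_des_eq_dmat (i v : ℕ) :
    #{p ∈ π.finite_des.toFinset | (p.1, π.entry p.1 p.2 - 1) = (i, v)} = π.dmat i v := by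
  rw [dmat, ← Set.ncard_image_of_injective _ (Prod.mk_right_injective i), ← Set.ncard_coe_finset]
  congr 1
  ext ⟨i', j⟩
  simp only [coe_filter, Set.Finite.mem_toFinset, Des, Set.mem_ofPred_eq, Prod.mk.injEq,
    Set.mem_image]
  constructor
  · rintro ⟨hdes, rfl, hv⟩
    exact ⟨j, ⟨by omega, by omega⟩, rfl, rfl⟩
  · rintro ⟨j, ⟨hj, hj'⟩, rfl, rfl⟩
    exact ⟨by omega, rfl, by omega⟩

theorem sum_des_eq (hR : π.RowsLE n) (hE : π.EntriesLE m) (g : ℕ → ℕ → ℕ) :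
    ∑ p ∈ π.finite_des.toFinset, g p.1 (π.entry p.1 p.2) =
      ∑ i ∈ range n, ∑ v ∈ range m, π.dmat i v * g i (v + 1) := by
  have hmaps : ∀ p ∈ π.finite_des.toFinset,
      (p.1, π.entry p.1 p.2 - 1) ∈ range n ×ˢ range m := fun p hp => by
    have hpos : 0 < π.entry p.1 p.2 := Nat.zero_lt_of_lt (π.finite_des.mem_toFinset.1 hp)
    have := hE p.1 p.2
    have : n ≤ p.1 → π.entry p.1 p.2 = 0 := hR p.1 p.2
    simp only [mem_product, mem_range]
    omega
  rw [← sum_product' (f := fun i v => π.dmat i v * g i (v + 1)), ← sum_fiberwise_of_maps_to hmaps]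
  refine sum_congr rfl fun ⟨i, v⟩ _ => ?_
  rw [← π.card_filter_des_eq_dmat, ← smul_eq_mul, ← sum_const]
  refine sum_congr rfl fun p hp => ?_
  obtain ⟨hdes, hpiv⟩ := mem_filter.1 hp
  obtain ⟨rfl, hv⟩ := Prod.mk.inj hpiv
  have : 0 < π.entry p.1 p.2 := Nat.zero_lt_of_lt (π.finite_des.mem_toFinset.1 hdes)
  rw [show π.entry p.1 p.2 = v + 1 by omega]

theorem des_eq_sum_dmat (hR : π.RowsLE n) (hE : π.EntriesLE m) :
    π.des = ∑ i ∈ range n, ∑ v ∈ range m, π.dmat i v := by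
  rw [des, Set.ncard_eq_toFinset_card _ π.finite_des, card_eq_sum_ones,
    π.sum_des_eq hR hE fun _ _ => 1]
  simp only [mul_one]

theorem uhvol_eq_sum_dmat (hR : π.RowsLE n) (hE : π.EntriesLE m) :
    π.uhvol = ∑ i ∈ range n, ∑ v ∈ range m, π.dmat i v * (i + v + 1) := by
  rw [uhvol, finsum_mem_eq_finite_toFinset_sum _ π.finite_des,
    π.sum_des_eq hR hE fun i x => x + i]
  exact sum_congr rfl fun i _ => sum_congr rfl fun v _ => by ring

section OfLastPassage

variable {c : ℕ → ℕ → ℕ}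

variable (n m c) in
noncomputable def ofLastPassage : PlanePartition where
  entry i := conjugate (lastPassage n m c i)
  row_decr i j :=
    conjugate_antitone lastPassage_antitone_right (lastPassage_right_eq_zero i) (Nat.le_succ j)
  col_decr i :=
    conjugate_mono lastPassage_antitone_right lastPassage_antitone_right
      (lastPassage_right_eq_zero i) fun _ => lastPassage_succ_left_le
  finite_support := by
    refine ((Set.finite_Iio n).prod (Set.finite_Iio (lastPassage n m c 0 0))).subset
      fun p (hp : conjugate _ _ ≠ 0) => ?_
    have h0 := lt_conjugate_lastPassage_iff.1 (Nat.pos_of_ne_zero hp)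
    have hi : p.1 < n := by
      by_contra hi
      rw [lastPassage_of_not_lt (by omega)] at h0
      omega
    exact ⟨hi, lt_of_lt_of_le h0 (lastPassage_antitone_left 0 (Nat.zero_le p.1))⟩

theorem conjugate_entry_ofLastPassage (i : ℕ) :
    conjugate ((ofLastPassage n m c).entry i) = lastPassage n m c i :=
  conjugate_conjugate lastPassage_antitone_right (lastPassage_right_eq_zero i)

theorem rowsLE_ofLastPassage : (ofLastPassage n m c).RowsLE n := fun i j hi =>
  Nat.eq_zero_of_not_pos fun h => by
    rw [ofLastPassage, lt_conjugate_lastPassage_iff, lastPassage_of_not_lt (by omega)] at h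
    omega

theorem entriesLE_ofLastPassage : (ofLastPassage n m c).EntriesLE m := fun i j =>
  not_lt.1 fun h => by
    rw [ofLastPassage, lt_conjugate_lastPassage_iff, lastPassage_right_eq_zero] at h
    omega

theorem dmat_ofLastPassage {i v : ℕ} (hi : i < n) (hv : v < m) :
    (ofLastPassage n m c).dmat i v = c i v := by
  rw [dmat_eq_conjugate, conjugate_entry_ofLastPassage, conjugate_entry_ofLastPassage,
    lastPassage_of_lt hi hv]
  omega

end OfLastPassage

end PlanePartition

/-- The exponent of `t q ^ (i + v + 1)` (with `t = X 0`, `q = X 1`), contributed by each descent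
in row `i` with entry `v + 1`. -/
noncomputable def uhWeight {n m : ℕ} (q : Fin n × Fin m) : Fin 2 →₀ ℕ :=
  Finsupp.single 0 1 + Finsupp.single 1 ((q.1 : ℕ) + q.2 + 1)

theorem uhWeight_ne_zero {n m : ℕ} (q : Fin n × Fin m) : uhWeight q ≠ 0 := fun h => by
  simpa [uhWeight] using DFunLike.congr_fun h 0

theorem Finsupp.single_zero_add_single_one_inj {a b a' b' : ℕ} :
    (single 0 a + single 1 b : Fin 2 →₀ ℕ) = single 0 a' + single 1 b' ↔ a = a' ∧ b = b' := by
  refine ⟨fun h => ⟨?_, ?_⟩, fun h => h.1 ▸ h.2 ▸ rfl⟩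
  · simpa using DFunLike.congr_fun h 0
  · simpa using DFunLike.congr_fun h 1

namespace PlanePartition

variable {n m : ℕ}

theorem sum_dmat_smul_uhWeight {π : PlanePartition} (hR : π.RowsLE n) (hE : π.EntriesLE m) :
    ∑ q : Fin n × Fin m, π.dmat q.1 q.2 • uhWeight q =
      Finsupp.single 0 π.des + Finsupp.single 1 π.uhvol := by
  simp only [uhWeight, smul_add, Finsupp.smul_single, smul_eq_mul, mul_one, sum_add_distrib,
    ← Finsupp.single_finsetSum, π.des_eq_sum_dmat hR hE, π.uhvol_eq_sum_dmat hR hE,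
    Finset.sum_range, Fintype.sum_prod_type]

theorem bijective_dmat :
    Function.Bijective fun π : {π : PlanePartition // π.RowsLE n ∧ π.EntriesLE m} =>
      fun q : Fin n × Fin m => π.1.dmat q.1 q.2 := by
  constructor
  · rintro ⟨π, hπR, hπE⟩ ⟨ρ, hρR, hρE⟩ h
    have hc : ∀ i < n, ∀ v < m, ρ.dmat i v = π.dmat i v := fun i hi v hv =>
      (congrFun h (⟨i, hi⟩, ⟨v, hv⟩)).symm
    refine Subtype.ext (ext (funext fun i => ?_))
    obtain ⟨_, hπN⟩ := π.exists_entry_eq_zero i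
    obtain ⟨_, hρN⟩ := ρ.exists_entry_eq_zero i
    rw [← conjugate_conjugate (π.antitone_entry i) hπN,
      ← conjugate_conjugate (ρ.antitone_entry i) hρN]
    congr 1
    funext v
    rw [π.conjugate_entry_eq_lastPassage hπR hπE fun _ _ _ _ => rfl,
      ρ.conjugate_entry_eq_lastPassage hρR hρE hc]
  · intro c
    let c' i v := if h : i < n ∧ v < m then c (⟨i, h.1⟩, ⟨v, h.2⟩) else 0
    refine ⟨⟨ofLastPassage n m c', rowsLE_ofLastPassage, entriesLE_ofLastPassage⟩,
      funext fun q => ?_⟩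
    simp [dmat_ofLastPassage q.1.isLt q.2.isLt, c']

theorem card_eq_card_sum_smul_uhWeight_eq (a b : ℕ) :
    Nat.card {π : PlanePartition // π.RowsLE n ∧ π.EntriesLE m ∧ π.des = a ∧ π.uhvol = b} =
      Nat.card {c : Fin n × Fin m → ℕ //
        ∑ q, c q • uhWeight q = Finsupp.single 0 a + Finsupp.single 1 b} := by
  refine Nat.card_congr <| (Equiv.subtypeEquivRight fun _ => and_assoc.symm).trans <|
    (Equiv.subtypeSubtypeEquivSubtypeInter _ _).symm.trans <|
      Equiv.subtypeEquiv (Equiv.ofBijective _ bijective_dmat) fun π => ?_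
  rw [Equiv.ofBijective_apply, sum_dmat_smul_uhWeight π.2.1 π.2.2,
    Finsupp.single_zero_add_single_one_inj]

end PlanePartition

/-- Coefficient-wise form of
`Σ_{π ∈ PP(∞,n,m)} t^{des(π)} q^{|π|_{uh}} = Π_{i=1}^m Π_{j=1}^n (1 - t q^{i+j-1})⁻¹`
(in variables `t = X 0`, `q = X 1`). -/
theorem uphook_gen_fun (n m a b : ℕ) :
    MvPowerSeries.coeff (Finsupp.single 0 a + Finsupp.single 1 b : Fin 2 →₀ ℕ)
      (∏ i ∈ Finset.range m, ∏ j ∈ Finset.range n,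
        (1 - MvPowerSeries.X 0 * (MvPowerSeries.X 1) ^ (i + j + 1) :
          MvPowerSeries (Fin 2) ℚ)⁻¹) =
    Nat.card {π : PlanePartition // π.RowsLE n ∧ π.EntriesLE m ∧
      π.des = a ∧ π.uhvol = b} := by
  have hprod : (∏ i ∈ range m, ∏ j ∈ range n,
      (1 - MvPowerSeries.X 0 * MvPowerSeries.X 1 ^ (i + j + 1))⁻¹ : MvPowerSeries (Fin 2) ℚ) =
      ∏ q : Fin n × Fin m, (1 - MvPowerSeries.monomial (uhWeight q) 1)⁻¹ := by
    rw [prod_comm, Fintype.prod_prod_type, Finset.prod_range]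
    refine prod_congr rfl fun j _ => ?_
    rw [Finset.prod_range]
    refine prod_congr rfl fun i _ => ?_
    rw [MvPowerSeries.X_pow_eq, MvPowerSeries.X_def, MvPowerSeries.monomial_mul_monomial, one_mul,
      uhWeight, add_comm (i : ℕ)]
  rw [hprod, MvPowerSeries.coeff_prod_inv_one_sub_monomial uhWeight_ne_zero,
    PlanePartition.card_eq_card_sum_smul_uhWeight_eq]
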